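/- arXiv:1006.0773 — 5 statements merged into one kernel-verified Lean document; each statement's English description precedes it below -/
import Mathlib

section
/- Supermodularity of quadratics in the dual Graver cone: Let f(x) = x^T V x + w^T x + a with V ∈ Q*(A). Let x ∈ ℝ^n, let g_1, …, g_t be distinct elements of the Graver basis G(A) pairwise lying in the same orthant, and μ_1, …, μ_t ≥ 0. Then f(x + Σ_i μ_i g_i) − f(x) ≥ Σ_i (f(x + μ_i g_i) − f(x)). -/
/-! Write `c r = μ r • g r`. The linear part of `f` cancels, so
`f (x + ∑ c) - f x - ∑ (f (x + c r) - f x) = ∑_{r ≠ q} c rᵀ V c q`. Grouping the pairs `(r, q)`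
and `(q, r)`, each summand becomes `μ r μ q ⟪g r g qᵀ + g q g rᵀ, V⟫`, which is nonnegative because
`g r g qᵀ + g q g rᵀ` is a generator of `Q(A)` and `V ∈ Q*(A)`. -/

open Matrix BigOperators

/-- The conformal order on `ℤ^n`. -/
def ConformalLE {n : ℕ} (x y : Fin n → ℤ) : Prop :=
  ∀ i, 0 ≤ x i * y i ∧ |x i| ≤ |y i|

/-- The Graver basis of an integer matrix `A`: the `⊑`-minimal elements of
`{x ∈ ℤ^n : Ax = 0, x ≠ 0}`. -/
def graverBasis {m n : ℕ} (A : Matrix (Fin m) (Fin n) ℤ) : Set (Fin n → ℤ) :=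
  {g | g ≠ 0 ∧ A.mulVec g = 0 ∧
    ∀ y : Fin n → ℤ, y ≠ 0 → A.mulVec y = 0 → ConformalLE y g → y = g}

/-- Cast an integer vector to a real vector. -/
def castVec {n : ℕ} (g : Fin n → ℤ) : Fin n → ℝ := fun i => (g i : ℝ)

/-- The cone generated by a set: all nonnegative finite linear combinations. -/
def coneGen {E : Type*} [AddCommMonoid E] [SMul ℝ E] (S : Set E) : Set E :=
  {x | ∃ (k : ℕ) (μ : Fin k → ℝ) (v : Fin k → E),
    (∀ i, 0 ≤ μ i) ∧ (∀ i, v i ∈ S) ∧ x = ∑ i, μ i • v i}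

/-- Generators of the quadratic Graver cone:  `g hᵀ + h gᵀ` over distinct
Graver basis elements in the same orthant. -/
def quadGravGens {m n : ℕ} (A : Matrix (Fin m) (Fin n) ℤ) :
    Set (Matrix (Fin n) (Fin n) ℝ) :=
  {M | ∃ g h : Fin n → ℤ, g ∈ graverBasis A ∧ h ∈ graverBasis A ∧ g ≠ h ∧
    (∀ i, 0 ≤ g i * h i) ∧
    M = vecMulVec (castVec g) (castVec h) + vecMulVec (castVec h) (castVec g)}

/-- The quadratic Graver cone `Q(A)`. -/
def quadGraverCone {m n : ℕ} (A : Matrix (Fin m) (Fin n) ℤ) :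
    Set (Matrix (Fin n) (Fin n) ℝ) :=
  coneGen (quadGravGens A)

/-- Generators of the diagonal Graver cone: pointwise products `g ∘ h`. -/
def diagGravGens {m n : ℕ} (A : Matrix (Fin m) (Fin n) ℤ) : Set (Fin n → ℝ) :=
  {v | ∃ g h : Fin n → ℤ, g ∈ graverBasis A ∧ h ∈ graverBasis A ∧ g ≠ h ∧
    (∀ i, 0 ≤ g i * h i) ∧ v = castVec g * castVec h}

/-- The diagonal Graver cone `D(A)`. -/
def diagGraverCone {m n : ℕ} (A : Matrix (Fin m) (Fin n) ℤ) : Set (Fin n → ℝ) :=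
  coneGen (diagGravGens A)

/-- The Frobenius inner product of two matrices. -/
def frob {n : ℕ} (U V : Matrix (Fin n) (Fin n) ℝ) : ℝ := ∑ i, ∑ j, U i j * V i j

/-- The dual quadratic Graver cone `Q*(A)` (within symmetric matrices). -/
def dualQuadGraverCone {m n : ℕ} (A : Matrix (Fin m) (Fin n) ℤ) :
    Set (Matrix (Fin n) (Fin n) ℝ) :=
  {V | V.IsSymm ∧ ∀ U ∈ quadGraverCone A, 0 ≤ frob U V}

/-- The dual diagonal Graver cone `D*(A)`. -/
def dualDiagGraverCone {m n : ℕ} (A : Matrix (Fin m) (Fin n) ℤ) :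
    Set (Fin n → ℝ) :=
  {v | ∀ u ∈ diagGraverCone A, 0 ≤ u ⬝ᵥ v}

theorem Finset.sum_diag_le_sum_sum {ι R : Type*} [AddCommGroup R]
    [PartialOrder R] [IsOrderedAddMonoid R] (s : Finset ι) (B : ι → ι → R)
    (hB : ∀ r ∈ s, ∀ q ∈ s, r ≠ q → 0 ≤ B r q + B q r) :
    ∑ r ∈ s, B r r ≤ ∑ r ∈ s, ∑ q ∈ s, B r q := by
  classical
  induction s using Finset.induction_on with
  | empty => simp
  | insert a s ha ih =>
    have hcross : 0 ≤ ∑ q ∈ s, (B a q + B q a) :=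
      Finset.sum_nonneg fun q hq =>
        hB a (mem_insert_self a s) q (mem_insert_of_mem hq) (ne_of_mem_of_not_mem hq ha).symm
    have ih' := ih fun r hr q hq => hB r (mem_insert_of_mem hr) q (mem_insert_of_mem hq)
    simp only [sum_insert ha, sum_add_distrib] at hcross ⊢
    calc B a a + ∑ r ∈ s, B r r
        ≤ B a a + ∑ r ∈ s, ∑ q ∈ s, B r q + (∑ q ∈ s, B a q + ∑ q ∈ s, B q a) :=
          le_add_of_le_of_nonneg (by gcongr) hcross
      _ = B a a + ∑ q ∈ s, B a q + (∑ r ∈ s, B r a + ∑ r ∈ s, ∑ q ∈ s, B r q) := by abel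

namespace Matrix

variable {ι n R : Type*} [Fintype n] [CommRing R]

theorem sum_dotProduct_mulVec_sum (V : Matrix n n R) (s : Finset ι) (c : ι → n → R) :
    (∑ r ∈ s, c r) ⬝ᵥ V *ᵥ ∑ q ∈ s, c q = ∑ r ∈ s, ∑ q ∈ s, c r ⬝ᵥ V *ᵥ c q := by
  simp only [mulVec_sum, dotProduct_sum, sum_dotProduct]
  exact Finset.sum_comm

theorem add_dotProduct_mulVec_add_sub (V : Matrix n n R) (w x u : n → R) (a : R) :
    ((x + u) ⬝ᵥ V *ᵥ (x + u) + w ⬝ᵥ (x + u) + a) - (x ⬝ᵥ V *ᵥ x + w ⬝ᵥ x + a) =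
      u ⬝ᵥ V *ᵥ u + (x ⬝ᵥ V *ᵥ u + u ⬝ᵥ V *ᵥ x + w ⬝ᵥ u) := by
  simp only [mulVec_add, dotProduct_add, add_dotProduct]
  ring

theorem sum_sub_le_sub_of_cross_nonneg [PartialOrder R] [IsOrderedRing R]
    (V : Matrix n n R) (w : n → R) (a : R)
    {f : (n → R) → R} (hf : ∀ x, f x = x ⬝ᵥ V *ᵥ x + w ⬝ᵥ x + a) (x : n → R)
    (s : Finset ι) (c : ι → n → R)
    (hc : ∀ r ∈ s, ∀ q ∈ s, r ≠ q → 0 ≤ c r ⬝ᵥ V *ᵥ c q + c q ⬝ᵥ V *ᵥ c r) :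
    ∑ r ∈ s, (f (x + c r) - f x) ≤ f (x + ∑ r ∈ s, c r) - f x := by
  set L : (n → R) → R := fun u => x ⬝ᵥ V *ᵥ u + u ⬝ᵥ V *ᵥ x + w ⬝ᵥ u
  have hincr : ∀ u, f (x + u) - f x = u ⬝ᵥ V *ᵥ u + L u := fun u => by
    rw [hf, hf]
    exact add_dotProduct_mulVec_add_sub V w x u a
  have hL : L (∑ r ∈ s, c r) = ∑ r ∈ s, L (c r) := by
    simp only [L, mulVec_sum, dotProduct_sum, sum_dotProduct, Finset.sum_add_distrib]
  calc ∑ r ∈ s, (f (x + c r) - f x)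
      = ∑ r ∈ s, c r ⬝ᵥ V *ᵥ c r + ∑ r ∈ s, L (c r) := by
        simp only [hincr, Finset.sum_add_distrib]
    _ ≤ ∑ r ∈ s, ∑ q ∈ s, c r ⬝ᵥ V *ᵥ c q + ∑ r ∈ s, L (c r) := by
        gcongr ?_ + _
        exact Finset.sum_diag_le_sum_sum s _ hc
    _ = f (x + ∑ r ∈ s, c r) - f x := by
        rw [hincr, sum_dotProduct_mulVec_sum, hL]

end Matrix

theorem frob_add_left {n : ℕ} (U U' V : Matrix (Fin n) (Fin n) ℝ) :
    frob (U + U') V = frob U V + frob U' V := by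
  simp only [frob, Matrix.add_apply, add_mul, Finset.sum_add_distrib]

theorem frob_vecMulVec {n : ℕ} (u v : Fin n → ℝ) (V : Matrix (Fin n) (Fin n) ℝ) :
    frob (vecMulVec u v) V = u ⬝ᵥ V *ᵥ v := by
  simp only [frob, vecMulVec_apply, dotProduct, mulVec, Finset.mul_sum]
  exact Finset.sum_congr rfl fun i _ => Finset.sum_congr rfl fun j _ => by ring

theorem subset_coneGen {E : Type*} [AddCommMonoid E] [Module ℝ E] (S : Set E) :
    S ⊆ coneGen S :=
  fun v hv => ⟨1, fun _ => 1, fun _ => v, fun _ => zero_le_one, fun _ => hv, by simp⟩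

theorem cross_nonneg_of_mem_dualQuadGraverCone {m n : ℕ} {A : Matrix (Fin m) (Fin n) ℤ}
    {V : Matrix (Fin n) (Fin n) ℝ} (hV : V ∈ dualQuadGraverCone A) {g h : Fin n → ℤ}
    (hg : g ∈ graverBasis A) (hh : h ∈ graverBasis A) (hgh : g ≠ h)
    (horth : ∀ i, 0 ≤ g i * h i) :
    0 ≤ castVec g ⬝ᵥ V *ᵥ castVec h + castVec h ⬝ᵥ V *ᵥ castVec g := by
  have hgen := hV.2 _ (subset_coneGen _ ⟨g, h, hg, hh, hgh, horth, rfl⟩)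
  rwa [frob_add_left, frob_vecMulVec, frob_vecMulVec] at hgen

/-- Supermodularity of quadratics whose matrix lies in the dual quadratic
Graver cone, on conformal sums of Graver basis elements. -/
theorem quadratic_supermodular {m n : ℕ} (A : Matrix (Fin m) (Fin n) ℤ)
    (V : Matrix (Fin n) (Fin n) ℝ) (hV : V ∈ dualQuadGraverCone A)
    (w : Fin n → ℝ) (a : ℝ)
    (f : (Fin n → ℝ) → ℝ) (hf : ∀ x, f x = x ⬝ᵥ V.mulVec x + w ⬝ᵥ x + a)
    (x : Fin n → ℝ) (t : ℕ) (g : Fin t → (Fin n → ℤ))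
    (hg : ∀ r, g r ∈ graverBasis A) (hdist : Function.Injective g)
    (horth : ∀ r s, ∀ i, 0 ≤ g r i * g s i)
    (μ : Fin t → ℝ) (hμ : ∀ r, 0 ≤ μ r) :
    ∑ r, (f (x + μ r • castVec (g r)) - f x) ≤
      f (x + ∑ r, μ r • castVec (g r)) - f x := by
  refine sum_sub_le_sub_of_cross_nonneg V w a hf x _ _ fun r _ q _ hrq => ?_
  have hcross := cross_nonneg_of_mem_dualQuadGraverCone hV (hg r) (hg q) (hdist.ne hrq)
    (horth r q)
  simp only [mulVec_smul, dotProduct_smul, smul_dotProduct, smul_eq_mul]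
  convert mul_nonneg (mul_nonneg (hμ r) (hμ q)) hcross using 1
  ring
end

section
/- Graver finiteness criterion (other direction): if the set S = {x ∈ ℤ^n : Ax = b, l ≤ x ≤ u} is infinite, then there exists g in the Graver basis G(A) with g_i ≤ 0 whenever u_i < ∞ and g_i ≥ 0 whenever l_i > −∞. -/
open Matrix BigOperators

/-- Integers extended with `±∞`. -/
abbrev Zinf := WithBot (WithTop ℤ)

/-- The canonical embedding of `ℤ` into `ℤ ∪ {±∞}`. -/
def toZinf (z : ℤ) : Zinf := ((z : WithTop ℤ) : Zinf)

/-- The feasible set `{x ∈ ℤ^n : Ax = b, l ≤ x ≤ u}`. -/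
def feasibleSet {m n : ℕ} (A : Matrix (Fin m) (Fin n) ℤ) (b : Fin m → ℤ)
    (l u : Fin n → Zinf) : Set (Fin n → ℤ) :=
  {x | A.mulVec x = b ∧ ∀ i, l i ≤ toZinf (x i) ∧ toZinf (x i) ≤ u i}

/-!
An infinite set of integer points whose coordinates are bounded above on `U` and below on `L`
contains, by Dickson's lemma applied to the slacks against these bounds, two distinct points
`x`, `y` with `y - x ≤ 0` on `U` and `y - x ≥ 0` on `L`. For the feasible set, `h = y - x` is a
nonzero element of `ker A`, and a `⊑`-minimal nonzero kernel vector below `h` (one of least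
`ℓ¹`-norm) is a Graver basis element with the sign pattern of `h`.
-/

theorem Set.Infinite.exists_ne_of_bddAbove_of_bddBelow {ι : Type*} [Finite ι] {S : Set (ι → ℤ)}
    (hS : S.Infinite) {U L : Set ι} (hU : ∀ i ∈ U, BddAbove ((fun x => x i) '' S))
    (hL : ∀ i ∈ L, BddBelow ((fun x => x i) '' S)) :
    ∃ x ∈ S, ∃ y ∈ S, x ≠ y ∧ (∀ i ∈ U, y i ≤ x i) ∧ (∀ i ∈ L, x i ≤ y i) := by
  choose! c hc using hU
  choose! d hd using hL
  let e := Set.Infinite.natEmbedding S hS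
  let f : ℕ → ι → ℤ := fun k => e k
  have hfS (k : ℕ) : f k ∈ S := (e k).2
  have hf : Function.Injective f := Subtype.val_injective.comp e.injective
  let slack : ℕ → ι → ℕ × ℕ := fun k i => ((c i - f k i).toNat, (f k i - d i).toNat)
  obtain ⟨k₁, k₂, hk, hle⟩ := wellQuasiOrdered_le slack
  refine ⟨f k₁, hfS k₁, f k₂, hfS k₂, hf.ne hk.ne, fun i hi => ?_, fun i hi => ?_⟩
  · have h₁ : f k₁ i ≤ c i := hc i hi ⟨f k₁, hfS k₁, rfl⟩
    have h₂ : f k₂ i ≤ c i := hc i hi ⟨f k₂, hfS k₂, rfl⟩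
    have : (c i - f k₁ i).toNat ≤ (c i - f k₂ i).toNat := (hle i).1
    omega
  · have h₁ : d i ≤ f k₁ i := hd i hi ⟨f k₁, hfS k₁, rfl⟩
    have h₂ : d i ≤ f k₂ i := hd i hi ⟨f k₂, hfS k₂, rfl⟩
    have : (f k₁ i - d i).toNat ≤ (f k₂ i - d i).toNat := (hle i).2
    omega

theorem bddAbove_setOf_toZinf_le {z : Zinf} (hz : z ≠ ⊤) : BddAbove {x : ℤ | toZinf x ≤ z} := by
  induction z using WithBot.recBotCoe with
  | bot => simp [toZinf]
  | coe w =>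
    induction w using WithTop.recTopCoe with
    | top => exact absurd rfl hz
    | coe c => exact ⟨c, fun x hx => by simpa [toZinf] using hx⟩

theorem bddBelow_setOf_le_toZinf {z : Zinf} (hz : z ≠ ⊥) : BddBelow {x : ℤ | z ≤ toZinf x} := by
  induction z using WithBot.recBotCoe with
  | bot => exact absurd rfl hz
  | coe w =>
    induction w using WithTop.recTopCoe with
    | top => simp [toZinf]
    | coe c => exact ⟨c, fun x hx => by simpa [toZinf] using hx⟩

theorem exists_recession_of_feasibleSet_infinite {m n : ℕ} {A : Matrix (Fin m) (Fin n) ℤ}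
    {b : Fin m → ℤ} {l u : Fin n → Zinf} (hinf : (feasibleSet A b l u).Infinite) :
    ∃ h : Fin n → ℤ, h ≠ 0 ∧ A *ᵥ h = 0 ∧
      (∀ i, u i ≠ ⊤ → h i ≤ 0) ∧ (∀ i, l i ≠ ⊥ → 0 ≤ h i) := by
  obtain ⟨x, hx, y, hy, hxy, hyx_u, hxy_l⟩ :=
    hinf.exists_ne_of_bddAbove_of_bddBelow (U := {i | u i ≠ ⊤}) (L := {i | l i ≠ ⊥})
      (fun i hi => (bddAbove_setOf_toZinf_le hi).mono
        (by rintro _ ⟨z, hz, rfl⟩; exact (hz.2 i).2))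
      (fun i hi => (bddBelow_setOf_le_toZinf hi).mono
        (by rintro _ ⟨z, hz, rfl⟩; exact (hz.2 i).1))
  refine ⟨y - x, sub_ne_zero.mpr hxy.symm, ?_, fun i hi => ?_, fun i hi => ?_⟩
  · rw [mulVec_sub, hy.1, hx.1, sub_self]
  · exact sub_nonpos.mpr (hyx_u i hi)
  · exact sub_nonneg.mpr (hxy_l i hi)

namespace ConformalLE

variable {n : ℕ} {x y z : Fin n → ℤ}

theorem refl (x : Fin n → ℤ) : ConformalLE x x :=
  fun _ => ⟨mul_self_nonneg _, le_rfl⟩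

theorem trans (hxy : ConformalLE x y) (hyz : ConformalLE y z) : ConformalLE x z := by
  intro i
  obtain ⟨hxy_sign, hxy_abs⟩ := hxy i
  obtain ⟨hyz_sign, hyz_abs⟩ := hyz i
  refine ⟨?_, hxy_abs.trans hyz_abs⟩
  rcases eq_or_ne (y i) 0 with hy | hy
  · simp [abs_nonpos_iff.mp (hy ▸ hxy_abs)]
  · have : 0 ≤ (x i * z i) * (y i * y i) := by nlinarith [mul_nonneg hxy_sign hyz_sign]
    exact nonneg_of_mul_nonneg_left this (mul_self_pos.mpr hy)

theorem eq_of_sum_natAbs_le (hxy : ConformalLE x y)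
    (hsum : ∑ i, (y i).natAbs ≤ ∑ i, (x i).natAbs) : x = y := by
  have hle : ∀ i, (x i).natAbs ≤ (y i).natAbs := fun i =>
    Int.natAbs_le_iff_sq_le.mpr (sq_le_sq.mpr (hxy i).2)
  have hsum_eq : ∑ i, (x i).natAbs = ∑ i, (y i).natAbs :=
    (Finset.sum_le_sum fun i _ => hle i).antisymm hsum
  have hnatAbs (i : Fin n) : (x i).natAbs = (y i).natAbs :=
    (Finset.sum_eq_sum_iff_of_le fun i _ => hle i).mp hsum_eq i (Finset.mem_univ i)
  funext i
  rcases Int.natAbs_eq_natAbs_iff.mp (hnatAbs i) with h | h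
  · exact h
  · have := (hxy i).1
    rw [h] at this ⊢
    nlinarith

theorem nonpos_of_nonpos (hxy : ConformalLE x y) {i : Fin n} (hy : y i ≤ 0) : x i ≤ 0 := by
  obtain ⟨hsign, habs⟩ := hxy i
  rcases hy.lt_or_eq with hy | hy
  · nlinarith
  · exact (abs_nonpos_iff.mp (by rwa [hy] at habs)).le

theorem nonneg_of_nonneg (hxy : ConformalLE x y) {i : Fin n} (hy : 0 ≤ y i) : 0 ≤ x i := by
  obtain ⟨hsign, habs⟩ := hxy i
  rcases hy.lt_or_eq with hy | hy
  · nlinarith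
  · exact (abs_nonpos_iff.mp (by rwa [← hy] at habs)).ge

end ConformalLE

theorem exists_mem_graverBasis_conformalLE {m n : ℕ} (A : Matrix (Fin m) (Fin n) ℤ)
    {h : Fin n → ℤ} (hne : h ≠ 0) (hker : A *ᵥ h = 0) :
    ∃ g ∈ graverBasis A, ConformalLE g h := by
  let T : Set (Fin n → ℤ) := {y | y ≠ 0 ∧ A *ᵥ y = 0 ∧ ConformalLE y h}
  obtain ⟨g, ⟨hg₀, hgA, hgh⟩, hmin⟩ :=
    (measure fun y : Fin n → ℤ => ∑ i, (y i).natAbs).wf.has_min T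
      ⟨h, hne, hker, ConformalLE.refl h⟩
  refine ⟨g, ⟨hg₀, hgA, fun y hy₀ hyA hyg => hyg.eq_of_sum_natAbs_le ?_⟩, hgh⟩
  exact not_lt.mp (hmin y ⟨hy₀, hyA, hyg.trans hgh⟩)

/-- If the feasible set is infinite, some Graver basis element respects the
finite bounds' directions. -/
theorem graver_finiteness_backward {m n : ℕ} (A : Matrix (Fin m) (Fin n) ℤ)
    (b : Fin m → ℤ) (l u : Fin n → Zinf)
    (hinf : (feasibleSet A b l u).Infinite) :
    ∃ g ∈ graverBasis A,
      (∀ i, u i ≠ ⊤ → g i ≤ 0) ∧ (∀ i, l i ≠ ⊥ → 0 ≤ g i) := by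
  obtain ⟨h, hne, hker, hu, hl⟩ := exists_recession_of_feasibleSet_infinite hinf
  obtain ⟨g, hg, hgh⟩ := exists_mem_graverBasis_conformalLE A hne hker
  exact ⟨g, hg, fun i hi => hgh.nonpos_of_nonpos (hu i hi),
    fun i hi => hgh.nonneg_of_nonneg (hl i hi)⟩
end

section
/- Matroid characterization, sufficiency direction: if C and E are distinct matroid-circuits of A (supports of circuits c, e ∈ C(A)) with C ∩ E = {k}, then the unit vector e_k lies in the diagonal Graver cone D(A). -/
open Matrix BigOperators

/-- A circuit of `A`: a nonzero integer kernel element with inclusion-minimal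
support and relatively prime entries. -/
def isCircuit {m n : ℕ} (A : Matrix (Fin m) (Fin n) ℤ) (c : Fin n → ℤ) : Prop :=
  c ≠ 0 ∧ A.mulVec c = 0 ∧ Finset.univ.gcd c = 1 ∧
    ∀ y : Fin n → ℤ, y ≠ 0 → A.mulVec y = 0 →
      Function.support y ⊆ Function.support c →
      Function.support y = Function.support c

lemma my_graver_neg {m n : ℕ} {A : Matrix (Fin m) (Fin n) ℤ} {g : Fin n → ℤ}
    (hg : g ∈ graverBasis A) : -g ∈ graverBasis A := by
  obtain ⟨h0, hA, hmin⟩ := hg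
  refine ⟨neg_ne_zero.mpr h0, by rw [Matrix.mulVec_neg, hA, neg_zero], ?_⟩
  intro y hy hAy hcle
  have h : -y = g := by
    refine hmin (-y) (neg_ne_zero.mpr hy) (by rw [Matrix.mulVec_neg, hAy, neg_zero]) ?_
    intro i
    obtain ⟨h1, h2⟩ := hcle i
    refine ⟨?_, by simpa using h2⟩
    have : y i * (-g) i = -(y i * g i) := by simp [mul_comm]
    simp only [Pi.neg_apply, neg_mul]
    simpa [this] using h1
  rw [← h, neg_neg]

lemma my_circuit_mem_graver {m n : ℕ} {A : Matrix (Fin m) (Fin n) ℤ} {c : Fin n → ℤ}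
    (hc : isCircuit A c) : c ∈ graverBasis A := by
  obtain ⟨hc0, hcA, hgcd, hmin⟩ := hc
  refine ⟨hc0, hcA, ?_⟩
  intro y hy0 hyA hle
  have hsupp : Function.support y ⊆ Function.support c := by
    intro i hi
    simp only [Function.mem_support] at hi ⊢
    intro hci
    have h2 := (hle i).2
    rw [hci] at h2
    simp only [abs_zero] at h2
    exact hi (abs_nonpos_iff.mp h2)
  obtain ⟨j, hj⟩ : ∃ j, c j ≠ 0 := Function.ne_iff.mp hc0
  set z : Fin n → ℤ := c j • y - y j • c with hz
  have hzA : A.mulVec z = 0 := by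
    rw [hz, Matrix.mulVec_sub, Matrix.mulVec_smul, Matrix.mulVec_smul, hcA, hyA]
    simp
  have hz0 : z = 0 := by
    by_contra hzz
    have hzsub : Function.support z ⊆ Function.support c := by
      intro i hi
      simp only [Function.mem_support] at hi ⊢
      intro hci
      have hyi : y i = 0 := by
        by_contra h
        exact Function.mem_support.mp (hsupp (Function.mem_support.mpr h)) hci
      simp [hz, hci, hyi] at hi
    have heq := hmin z hzz hzA hzsub
    have hjz : z j = 0 := by simp [hz, mul_comm]
    have : j ∈ Function.support z := heq ▸ Function.mem_support.mpr hj
    exact Function.mem_support.mp this hjz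
  have key : ∀ i, c j * y i = y j * c i := by
    intro i
    have := congrFun hz0 i
    simp only [hz, Pi.sub_apply, Pi.smul_apply, smul_eq_mul, Pi.zero_apply,
      sub_eq_zero] at this
    exact this
  have hdvd : c j ∣ y j := by
    have h1 : c j ∣ Finset.univ.gcd (fun i => y j * c i) :=
      Finset.dvd_gcd fun i _ => ⟨y i, (key i).symm⟩
    rw [Finset.gcd_mul_left, hgcd, mul_one] at h1
    rw [← Int.abs_eq_normalize] at h1
    exact (dvd_abs _ _).mp h1
  obtain ⟨t, ht⟩ := hdvd
  have hyi : ∀ i, y i = t * c i := by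
    intro i
    have h1 : c j * y i = c j * (t * c i) := by
      rw [key i, ht]; ring
    exact mul_left_cancel₀ hj h1
  have ht0 : t ≠ 0 := by
    intro h
    apply hy0
    funext i
    simp [hyi i, h]
  have htabs : |t| = 1 := by
    have h2 := (hle j).2
    rw [hyi j, abs_mul] at h2
    have h1t : 1 ≤ |t| := Int.one_le_abs ht0
    have hle1 : |t| ≤ 1 := by
      have hcj : 0 < |c j| := abs_pos.mpr hj
      nlinarith
    omega
  have htpos : t = 1 := by
    rcases (abs_eq (by norm_num : (0:ℤ) ≤ 1)).mp htabs with h | h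
    · exact h
    · exfalso
      have h1 := (hle j).1
      rw [hyi j, h] at h1
      nlinarith [mul_self_pos.mpr hj]
  funext i
  rw [hyi i, htpos, one_mul]
/-- If `C, E` are distinct matroid-circuits of `A` meeting exactly in `{k}`,
then the `k`-th unit vector lies in the diagonal Graver cone `D(A)`. -/
theorem unit_mem_diagGraverCone_of_circuits {m n : ℕ}
    (A : Matrix (Fin m) (Fin n) ℤ) (c e : Fin n → ℤ) (k : Fin n)
    (hc : isCircuit A c) (he : isCircuit A e)
    (hne : Function.support c ≠ Function.support e)
    (hcap : Function.support c ∩ Function.support e = {k}) :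
    Pi.single k (1 : ℝ) ∈ diagGraverCone A := by
  have hk : k ∈ Function.support c ∩ Function.support e := by
    rw [hcap]; exact rfl
  have hck : c k ≠ 0 := hk.1
  have hek : e k ≠ 0 := hk.2
  -- choose sign
  set e' : Fin n → ℤ := if 0 < c k * e k then e else -e with he'
  have he'g : e' ∈ graverBasis A := by
    rw [he']
    split
    · exact my_circuit_mem_graver he
    · exact my_graver_neg (my_circuit_mem_graver he)
  have hpos : 0 < c k * e' k := by
    by_cases h : 0 < c k * e k
    · simpa [he', if_pos h] using h
    · have h2 : c k * e k < 0 := lt_of_le_of_ne (not_lt.mp h) (mul_ne_zero hck hek)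
      simp only [he', if_neg h, Pi.neg_apply, mul_neg]
      omega
  have he's : Function.support e' = Function.support e := by
    by_cases h : 0 < c k * e k
    · rw [he', if_pos h]
    · rw [he', if_neg h]
      exact Function.support_neg e
  have hzero : ∀ i, i ≠ k → c i * e' i = 0 := by
    intro i hik
    have : i ∉ Function.support c ∩ Function.support e := by
      rw [hcap]; exact hik
    simp only [Set.mem_inter_iff, not_and_or] at this
    rcases this with h | h
    · have hci : c i = 0 := Function.notMem_support.mp h
      rw [hci, zero_mul]
    · have hei : e i = 0 := Function.notMem_support.mp h
      by_cases hcase : 0 < c k * e k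
      · rw [he', if_pos hcase, hei, mul_zero]
      · rw [he', if_neg hcase]
        simp [hei]
  have hcne : c ≠ e' := by
    intro h
    apply hne
    rw [← he's, h]
  have horth : ∀ i, 0 ≤ c i * e' i := by
    intro i
    by_cases hik : i = k
    · subst hik; exact hpos.le
    · rw [hzero i hik]
  refine ⟨1, fun _ => ((c k : ℝ) * (e' k : ℝ))⁻¹, fun _ => castVec c * castVec e',
    ?_, ?_, ?_⟩
  · intro _
    have : (0:ℝ) < (c k : ℝ) * (e' k : ℝ) := by
      exact_mod_cast hpos
    positivity
  · intro _
    exact ⟨c, e', my_circuit_mem_graver hc, he'g, hcne, horth, rfl⟩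
  · rw [Fin.sum_univ_one]
    funext i
    by_cases hik : i = k
    · subst hik
      have hne0 : ((c i : ℝ) * (e' i : ℝ)) ≠ 0 := by
        exact_mod_cast mul_ne_zero hck (by
          intro h; rw [h, mul_zero] at hpos; exact lt_irrefl 0 hpos)
      simp only [Pi.smul_apply, smul_eq_mul, Pi.mul_apply, castVec, Pi.single_eq_same]
      exact (inv_mul_cancel₀ hne0).symm
    · have h0 : c i * e' i = 0 := hzero i hik
      have : (c i : ℝ) * (e' i : ℝ) = 0 := by exact_mod_cast h0
      simp [castVec, Pi.single_apply, hik, this]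
end

section
/- Matroid characterization, necessity direction: if the unit vector e_k lies in the diagonal Graver cone D(A), then there exist two distinct matroid-circuits C, E of A with C ∩ E = {k}. -/
open Matrix BigOperators

/-! Since `D(A)` lies in the nonnegative orthant, where `e_k` spans an extreme ray, some generator
`g ∘ h` of `D(A)` is supported exactly on `{k}`: the Graver elements `g` and `h` meet only in `k`.
Conformal circuit decompositions of `g` and `h` contain circuits `c` and `e` that are nonzero at `k`
and supported inside `supp g` and `supp h`, so `supp c ∩ supp e = {k}`. If these supports were
equal, `c` would be a kernel vector supported on `{k}`, so column `k` of `A` would vanish; then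
`±e_k` are the only Graver elements touching `k`, and `g = h` since `g k * h k > 0`. -/

open Function

theorem exists_mem_support_subset_of_mem_coneGen {ι : Type*} {S : Set (ι → ℝ)}
    (hS : ∀ v ∈ S, 0 ≤ v) {x : ι → ℝ} (hx : x ∈ coneGen S) {k : ι} (hxk : x k ≠ 0) :
    ∃ v ∈ S, v k ≠ 0 ∧ support v ⊆ support x := by
  obtain ⟨N, μ, v, hμ, hvS, rfl⟩ := hx
  have hterm_nonneg : ∀ i j, 0 ≤ μ i * v i j := fun i j => mul_nonneg (hμ i) (hS _ (hvS i) j)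
  simp only [Finset.sum_apply, Pi.smul_apply, smul_eq_mul] at hxk
  obtain ⟨i, -, hi⟩ := Finset.exists_ne_zero_of_sum_ne_zero hxk
  refine ⟨v i, hvS i, right_ne_zero_of_mul hi, fun j hj => ?_⟩
  contrapose! hj
  simp only [notMem_support, Finset.sum_apply, Pi.smul_apply, smul_eq_mul] at hj
  have hij := (Finset.sum_eq_zero_iff_of_nonneg fun i _ => hterm_nonneg i j).mp hj i
    (Finset.mem_univ i)
  exact notMem_support.mpr ((mul_eq_zero.mp hij).resolve_left (left_ne_zero_of_mul hi))

theorem support_castVec {n : ℕ} (g : Fin n → ℤ) : support (castVec g) = support g :=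
  support_comp_eq Int.cast (fun {_} => Int.cast_eq_zero) g

theorem support_castVec_mul {n : ℕ} (g h : Fin n → ℤ) :
    support (castVec g * castVec h) = support g ∩ support h := by
  rw [support_mul', support_castVec, support_castVec]

theorem diagGravGens_nonneg {m n : ℕ} {A : Matrix (Fin m) (Fin n) ℤ} {v : Fin n → ℝ}
    (hv : v ∈ diagGravGens A) : 0 ≤ v := by
  obtain ⟨g, h, -, -, -, hgh, rfl⟩ := hv
  intro i
  show (0 : ℝ) ≤ (g i : ℝ) * (h i : ℝ)
  exact_mod_cast hgh i

theorem col_eq_zero_of_support_eq_singleton {m n : ℕ} {A : Matrix (Fin m) (Fin n) ℤ}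
    {c : Fin n → ℤ} (hc : A *ᵥ c = 0) {k : Fin n} (hck : support c = {k}) : A.col k = 0 := by
  have hc_single : c = Pi.single k (c k) := by
    ext j
    by_cases hj : j = k
    · subst hj; simp
    · rw [Pi.single_eq_of_ne hj, ← notMem_support, hck]; exact hj
  have hck0 : c k ≠ 0 := by simp [← mem_support, hck]
  ext i
  have := congrFun hc i
  rw [hc_single, mulVec_single] at this
  simpa [hck0] using this

theorem eq_single_sign_of_mem_graverBasis {m n : ℕ} {A : Matrix (Fin m) (Fin n) ℤ} {k : Fin n}
    (hcol : A.col k = 0) {g : Fin n → ℤ} (hg : g ∈ graverBasis A) (hgk : g k ≠ 0) :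
    g = Pi.single k (g k).sign := by
  obtain ⟨-, -, hmin⟩ := hg
  refine (hmin _ ?_ ?_ ?_).symm
  · simp [hgk]
  · simp [mulVec_single, hcol]
  · intro j
    by_cases hj : j = k
    · subst hj
      simp only [Pi.single_eq_same, Int.sign_mul_self_eq_abs, abs_nonneg, true_and,
        Int.abs_sign_of_ne_zero hgk]
      exact Int.one_le_abs hgk
    · simp [Pi.single_eq_of_ne hj]

theorem eq_of_mem_graverBasis_of_col_eq_zero {m n : ℕ} {A : Matrix (Fin m) (Fin n) ℤ}
    {k : Fin n} (hcol : A.col k = 0) {g h : Fin n → ℤ} (hg : g ∈ graverBasis A)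
    (hh : h ∈ graverBasis A) (hghk : 0 < g k * h k) : g = h := by
  rw [eq_single_sign_of_mem_graverBasis hcol hg (left_ne_zero_of_mul hghk.ne'),
    eq_single_sign_of_mem_graverBasis hcol hh (right_ne_zero_of_mul hghk.ne')]
  rcases mul_pos_iff.mp hghk with ⟨hgk, hhk⟩ | ⟨hgk, hhk⟩
  · rw [Int.sign_eq_one_of_pos hgk, Int.sign_eq_one_of_pos hhk]
  · rw [Int.sign_eq_neg_one_of_neg hgk, Int.sign_eq_neg_one_of_neg hhk]

def HasConformalCircuitDecomposition {m n : ℕ} (A : Matrix (Fin m) (Fin n) ℤ) : Prop :=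
  ∀ x : Fin n → ℤ, x ≠ 0 → A.mulVec x = 0 →
    ∃ (t : ℕ) (α : Fin t → ℝ) (c : Fin t → (Fin n → ℤ)),
      (∀ r, 0 ≤ α r) ∧ (∀ r, isCircuit A (c r)) ∧
      (∀ r i, 0 ≤ c r i * x i ∧ |c r i| ≤ |x i|) ∧
      castVec x = ∑ r, α r • castVec (c r)

theorem HasConformalCircuitDecomposition.exists_isCircuit {m n : ℕ}
    {A : Matrix (Fin m) (Fin n) ℤ} (hA : HasConformalCircuitDecomposition A)
    {x : Fin n → ℤ} (hx : x ≠ 0) (hAx : A *ᵥ x = 0) {k : Fin n} (hxk : k ∈ support x) :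
    ∃ c, isCircuit A c ∧ k ∈ support c ∧ support c ⊆ support x := by
  obtain ⟨t, α, c, -, hcirc, hconf, hsum⟩ := hA x hx hAx
  have hxk' : ∑ r, α r * (c r k : ℝ) ≠ 0 := by
    have hsum_k := congrFun hsum k
    simp only [castVec, Finset.sum_apply, Pi.smul_apply, smul_eq_mul] at hsum_k
    exact hsum_k ▸ Int.cast_ne_zero.mpr hxk
  obtain ⟨r, -, hr⟩ := Finset.exists_ne_zero_of_sum_ne_zero hxk'
  refine ⟨c r, hcirc r, by exact_mod_cast right_ne_zero_of_mul hr, fun j hj => ?_⟩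
  contrapose! hj
  rw [notMem_support] at hj ⊢
  simpa [hj] using (hconf r j).2

/-- If the `k`-th unit vector lies in the diagonal Graver cone `D(A)`, then
there are two distinct matroid-circuits of `A` meeting exactly in `{k}`.
The conformal circuit decomposition property is assumed as a hypothesis. -/
theorem circuits_of_unit_mem_diagGraverCone {m n : ℕ}
    (A : Matrix (Fin m) (Fin n) ℤ)
    (hdecomp : ∀ x : Fin n → ℤ, x ≠ 0 → A.mulVec x = 0 →
      ∃ (t : ℕ) (α : Fin t → ℝ) (c : Fin t → (Fin n → ℤ)),
        (∀ r, 0 ≤ α r) ∧ (∀ r, isCircuit A (c r)) ∧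
        (∀ r i, 0 ≤ c r i * x i ∧ |c r i| ≤ |x i|) ∧
        castVec x = ∑ r, α r • castVec (c r))
    (k : Fin n) (hk : Pi.single k (1 : ℝ) ∈ diagGraverCone A) :
    ∃ c e : Fin n → ℤ, isCircuit A c ∧ isCircuit A e ∧
      Function.support c ≠ Function.support e ∧
      Function.support c ∩ Function.support e = {k} := by
  have hA : HasConformalCircuitDecomposition A := hdecomp
  obtain ⟨_, ⟨g, h, hg, hh, hgh, hgh_nonneg, rfl⟩, hghk, hgh_supp⟩ :=
    exists_mem_support_subset_of_mem_coneGen (fun _ => diagGravGens_nonneg) hk (k := k) (by simp)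
  have hk_mem : k ∈ support g ∩ support h := by
    rwa [← mem_support, support_castVec_mul] at hghk
  rw [support_castVec_mul] at hgh_supp
  obtain ⟨c, hc, hck, hcg⟩ := hA.exists_isCircuit hg.1 hg.2.1 hk_mem.1
  obtain ⟨e, he, hek, heh⟩ := hA.exists_isCircuit hh.1 hh.2.1 hk_mem.2
  have hce : support c ∩ support e = {k} :=
    subset_antisymm
      (((Set.inter_subset_inter hcg heh).trans hgh_supp).trans Pi.support_single_subset)
      (Set.singleton_subset_iff.mpr ⟨hck, hek⟩)
  refine ⟨c, e, hc, he, fun hsupp => hgh ?_, hce⟩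
  have hcol : A.col k = 0 :=
    col_eq_zero_of_support_eq_singleton hc.2.1 (by rw [← hce, hsupp, Set.inter_self])
  exact eq_of_mem_graverBasis_of_col_eq_zero hcol hg hh
    (lt_of_le_of_ne (hgh_nonneg k) (mul_ne_zero hk_mem.1 hk_mem.2).symm)
end

section
/- Supermodularity for homogeneous forms: let f(x) = ⟨F, x^{⊗d}⟩ be a degree-d form with coefficient tensor F such that for all 2 ≤ k ≤ d every k-dimensional subtensor of F lies in the dual Graver cone P_k*(A) (i.e., has nonnegative inner product with g^1 ⊗ ⋯ ⊗ g^k for all g^i ∈ G(A) pairwise in the same orthant and not all equal). Then for every nonnegative x ∈ ℝ_+^n, distinct g^1, …, g^t ∈ G(A) pairwise in the same orthant, and μ_r ≥ 0: f(x + Σ_r μ_r g^r) − f(x) ≥ Σ_r (f(x + μ_r g^r) − f(x)). -/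
open Matrix BigOperators

/-- A degree-`d` homogeneous form `⟨F, x^{⊗d}⟩` given by a coefficient tensor
`F`, modelled as a function on multi-indices. -/
def tensorForm {n d : ℕ} (F : (Fin d → Fin n) → ℝ) (x : Fin n → ℝ) : ℝ :=
  ∑ idx : Fin d → Fin n, F idx * ∏ p, x (idx p)

/-- The `k`-dimensional subtensor of `F` obtained by letting the indices in
the image of `ι` vary and fixing the remaining indices according to `σ`. -/
noncomputable def subtensor {n d k : ℕ} (F : (Fin d → Fin n) → ℝ) (ι : Fin k ↪ Fin d)
    (σ : Fin d → Fin n) : (Fin k → Fin n) → ℝ :=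
  fun j => F (fun p => if h : ∃ q, ι q = p then j h.choose else σ p)

/-- Membership in the dual Graver cone `P_k*(A)`: nonnegative inner product
with `g¹ ⊗ ⋯ ⊗ g^k` for all Graver basis elements pairwise in the same
orthant and not all equal. -/
def memDualGraverConeDeg {m n : ℕ} (A : Matrix (Fin m) (Fin n) ℤ) (k : ℕ)
    (T : (Fin k → Fin n) → ℝ) : Prop :=
  ∀ g : Fin k → (Fin n → ℤ), (∀ p, g p ∈ graverBasis A) →
    (∀ p q i, 0 ≤ g p i * g q i) → (∃ p q, g p ≠ g q) →
    0 ≤ ∑ j : Fin k → Fin n, T j * ∏ p, ((g p (j p) : ℝ))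

/-!
Expanding `f (x + ∑ r, μ r • g r)` multilinearly gives a sum over colorings `ρ` of the `d`
tensor slots, each slot receiving `x` or one of the vectors `μ r • g r`. The colorings using no
color other than `r` sum to `f (x + μ r • g r)`, so the difference of the two sides is the sum
over the colorings with two distinct colors. Fixing the `x`-slots, such a term is a nonnegative
combination of pairings of a subtensor of `F` with `g¹ ⊗ ⋯ ⊗ gᵏ`, which are nonnegative by the
dual Graver cone hypothesis.
-/

open Finset Function

section Extend

variable {κ δ α : Type*} (ι : κ ↪ δ)

theorem extend_comp_extend (j : κ → α) (σ : δ → α) :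
    extend ι (σ ∘ ι) (extend ι j σ) = σ := by
  funext p
  by_cases hp : ∃ q, ι q = p
  · obtain ⟨q, rfl⟩ := hp
    simp only [ι.injective.extend_apply, Function.comp_apply]
  · simp only [extend_apply' _ _ _ hp]

theorem involutive_extend_restrict :
    Involutive fun z : (δ → α) × (κ → α) => (extend ι z.2 z.1, z.1 ∘ ι) := fun z => by
  simp only [extend_comp ι.injective, extend_comp_extend ι]

variable [Fintype κ] [Fintype δ] [DecidableEq δ]

theorem sum_sum_extend [DecidableEq κ] [Fintype α] {M : Type*} [AddCommMonoid M]
    (H : (δ → α) → M) :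
    ∑ σ : δ → α, ∑ j : κ → α, H (extend ι j σ) = Fintype.card (κ → α) • ∑ idx, H idx := by
  calc ∑ σ : δ → α, ∑ j : κ → α, H (extend ι j σ)
      = ∑ z : (δ → α) × (κ → α), H (Involutive.toPerm _ (involutive_extend_restrict ι) z).1 := by
        rw [Fintype.sum_prod_type]; rfl
    _ = ∑ z : (δ → α) × (κ → α), H z.1 :=
        Equiv.sum_comp _ fun z : (δ → α) × (κ → α) => H z.1
    _ = Fintype.card (κ → α) • ∑ idx, H idx := by
        simp only [Fintype.sum_prod_type_right, sum_const, card_univ]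

theorem prod_apply_extend {M : Type*} [CommMonoid M]
    (f : δ → α → M) (j : κ → α) (σ : δ → α) :
    ∏ p, f p (extend ι j σ p) =
      (∏ q, f (ι q) (j q)) * ∏ p ∈ (univ.map ι)ᶜ, f p (σ p) := by
  rw [← prod_mul_prod_compl (univ.map ι), prod_map]
  congr 1
  · exact prod_congr rfl fun q _ => by simp [ι.injective.extend_apply]
  · refine prod_congr rfl fun p hp => ?_
    rw [extend_apply']
    simpa using hp

end Extend

theorem subtensor_apply {n d k : ℕ} (F : (Fin d → Fin n) → ℝ) (ι : Fin k ↪ Fin d)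
    (σ : Fin d → Fin n) (j : Fin k → Fin n) :
    subtensor F ι σ j = F (extend ι j σ) := by
  unfold subtensor
  congr 1
  funext p
  rw [extend_def]

def tensorMultilinearForm {n d : ℕ} (F : (Fin d → Fin n) → ℝ) (u : Fin d → Fin n → ℝ) : ℝ :=
  ∑ idx : Fin d → Fin n, F idx * ∏ p, u p (idx p)

theorem tensorMultilinearForm_nonneg {n d k : ℕ} (F : (Fin d → Fin n) → ℝ) (ι : Fin k ↪ Fin d)
    (w : Fin k → Fin n → ℝ) (hw : ∀ σ, 0 ≤ ∑ j, subtensor F ι σ j * ∏ q, w q (j q))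
    (u : Fin d → Fin n → ℝ) (c : Fin k → ℝ) (hc : ∀ q, 0 ≤ c q) (hu : ∀ q, u (ι q) = c q • w q)
    (hu_nonneg : ∀ p ∉ Set.range ι, 0 ≤ u p) :
    0 ≤ tensorMultilinearForm F u := by
  rcases isEmpty_or_nonempty (Fin d → Fin n) with _ | ⟨⟨idx⟩⟩
  · simp [tensorMultilinearForm]
  have hcard : 0 < Fintype.card (Fin k → Fin n) := Fintype.card_pos_iff.mpr ⟨idx ∘ ι⟩
  -- every `idx` equals `extend ι j σ` for exactly `card (Fin k → Fin n)` pairs `(σ, j)`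
  have key : Fintype.card (Fin k → Fin n) • tensorMultilinearForm F u =
      ∑ σ : Fin d → Fin n, ((∏ q, c q) * ∏ p ∈ (univ.map ι)ᶜ, u p (σ p)) *
        ∑ j, subtensor F ι σ j * ∏ q, w q (j q) := by
    rw [tensorMultilinearForm, ← sum_sum_extend ι]
    refine sum_congr rfl fun σ _ => ?_
    rw [mul_sum]
    refine sum_congr rfl fun j _ => ?_
    rw [prod_apply_extend ι u, subtensor_apply]
    simp only [hu, Pi.smul_apply, smul_eq_mul, prod_mul_distrib]
    ring
  have hsum : 0 ≤ Fintype.card (Fin k → Fin n) • tensorMultilinearForm F u := by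
    rw [key]
    refine sum_nonneg fun σ _ => mul_nonneg (mul_nonneg (prod_nonneg fun q _ => hc q) ?_) (hw σ)
    exact prod_nonneg fun p hp => hu_nonneg p (by simpa using hp) (σ p)
  rw [nsmul_eq_mul] at hsum
  exact nonneg_of_mul_nonneg_right hsum (by exact_mod_cast hcard)

theorem tensorForm_add_sum {n d : ℕ} {κ : Type*} (F : (Fin d → Fin n) → ℝ) (x : Fin n → ℝ)
    (v : κ → Fin n → ℝ) (R : Finset κ) :
    tensorForm F (x + ∑ r ∈ R, v r) =
      ∑ ρ ∈ Fintype.piFinset fun _ : Fin d => R.insertNone,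
        tensorMultilinearForm F fun p => (ρ p).elim x v := by
  simp only [tensorForm, tensorMultilinearForm, add_sum_eq_sum_insertNone, Finset.sum_apply,
    prod_univ_sum, mul_sum]
  exact sum_comm

section Colorings

variable {δ κ : Type*}

theorem exists_eq_some_of_ne_none {ρ : δ → Option κ} (h : ρ ≠ fun _ => none) :
    ∃ p r, ρ p = some r := by
  obtain ⟨p, hp⟩ := Function.ne_iff.mp h
  exact ⟨p, Option.ne_none_iff_exists'.mp hp⟩

variable [Fintype δ] [DecidableEq δ]

theorem mem_piFinset_insertNone_singleton {ρ : δ → Option κ} {s : κ} :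
    ρ ∈ Fintype.piFinset (fun _ => ({s} : Finset κ).insertNone) ↔
      ∀ p r, ρ p = some r → r = s := by
  simp [mem_insertNone]

theorem sum_monochromatic_le [Fintype κ] [DecidableEq κ] (T : (δ → Option κ) → ℝ)
    (hT : ∀ ρ p₁ p₂ r₁ r₂, ρ p₁ = some r₁ → ρ p₂ = some r₂ → r₁ ≠ r₂ → 0 ≤ T ρ) :
    ∑ s, (∑ ρ ∈ Fintype.piFinset (fun _ => ({s} : Finset κ).insertNone), T ρ - T fun _ => none)
      ≤ ∑ ρ, T ρ - T fun _ => none := by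
  set D : κ → Finset (δ → Option κ) := fun s =>
    (Fintype.piFinset fun _ => ({s} : Finset κ).insertNone).erase fun _ => none
  have hD : ((univ : Finset κ) : Set κ).PairwiseDisjoint D := by
    intro s _ s' _ hss'
    refine Finset.disjoint_left.mpr fun ρ hs hs' => hss' ?_
    obtain ⟨hρ, hs⟩ := mem_erase.mp hs
    obtain ⟨p, r, hr⟩ := exists_eq_some_of_ne_none hρ
    rw [← mem_piFinset_insertNone_singleton.mp hs p r hr,
      mem_piFinset_insertNone_singleton.mp (mem_erase.mp hs').2 p r hr]
  calc ∑ s, (∑ ρ ∈ Fintype.piFinset (fun _ => ({s} : Finset κ).insertNone), T ρ - T fun _ => none)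
      = ∑ s, ∑ ρ ∈ D s, T ρ := by
        refine sum_congr rfl fun s _ => (sum_erase_eq_sub ?_).symm
        exact mem_piFinset_insertNone_singleton.mpr fun _ _ h => nomatch h
    _ = ∑ ρ ∈ univ.biUnion D, T ρ := (sum_biUnion hD).symm
    _ ≤ ∑ ρ ∈ univ.erase fun _ => none, T ρ := by
        refine sum_le_sum_of_subset_of_nonneg (fun ρ hρ => ?_) fun ρ hρ hρD => ?_
        · obtain ⟨s, -, hs⟩ := mem_biUnion.mp hρ
          exact mem_erase.mpr ⟨(mem_erase.mp hs).1, mem_univ ρ⟩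
        · have hρ := (mem_erase.mp hρ).1
          obtain ⟨p₁, r₁, h₁⟩ := exists_eq_some_of_ne_none hρ
          have : ρ ∉ Fintype.piFinset fun _ => ({r₁} : Finset κ).insertNone := fun h =>
            hρD (mem_biUnion.mpr ⟨r₁, mem_univ _, mem_erase.mpr ⟨hρ, h⟩⟩)
          simp only [mem_piFinset_insertNone_singleton, not_forall] at this
          obtain ⟨p₂, r₂, h₂, hr⟩ := this
          exact hT ρ p₁ p₂ r₁ r₂ h₁ h₂ (Ne.symm hr)
    _ = ∑ ρ, T ρ - T fun _ => none := sum_erase_eq_sub (mem_univ _)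

end Colorings

theorem tensorMultilinearForm_coloring_nonneg {m n d t : ℕ} (A : Matrix (Fin m) (Fin n) ℤ)
    (F : (Fin d → Fin n) → ℝ)
    (hF : ∀ k, 2 ≤ k → k ≤ d → ∀ (ι : Fin k ↪ Fin d) (σ : Fin d → Fin n),
      memDualGraverConeDeg A k (subtensor F ι σ))
    {x : Fin n → ℝ} (hx : 0 ≤ x) {g : Fin t → Fin n → ℤ} (hg : ∀ r, g r ∈ graverBasis A)
    (hdist : Injective g) (horth : ∀ r s i, 0 ≤ g r i * g s i) {μ : Fin t → ℝ}
    (hμ : ∀ r, 0 ≤ μ r) {ρ : Fin d → Option (Fin t)} {p₁ p₂ : Fin d} {r₁ r₂ : Fin t}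
    (h₁ : ρ p₁ = some r₁) (h₂ : ρ p₂ = some r₂) (hr : r₁ ≠ r₂) :
    0 ≤ tensorMultilinearForm F fun p => (ρ p).elim x fun r => μ r • castVec (g r) := by
  set S := univ.filter fun p => (ρ p).isSome
  have hp₁ : p₁ ∈ S := by simp [S, h₁]
  have hp₂ : p₂ ∈ S := by simp [S, h₂]
  have hk : 2 ≤ S.card := one_lt_card.mpr ⟨p₁, hp₁, p₂, hp₂, fun h => hr (by simp_all)⟩
  set ι := (S.orderEmbOfFin rfl).toEmbedding
  have hι : ∀ p, p ∈ Set.range ι ↔ p ∈ S := fun p => by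
    simp only [ι, RelEmbedding.coe_toEmbedding, range_orderEmbOfFin, mem_coe]
  choose col hcol using fun q =>
    Option.isSome_iff_exists.mp (by simpa [S] using (hι (ι q)).mp ⟨q, rfl⟩)
  have exists_col_eq : ∀ {p r}, ρ p = some r → ∃ q, col q = r := fun {p r} h => by
    obtain ⟨q, rfl⟩ := (hι p).mpr (by simp [S, h])
    exact ⟨q, Option.some.inj ((hcol q).symm.trans h)⟩
  obtain ⟨q₁, rfl⟩ := exists_col_eq h₁
  obtain ⟨q₂, rfl⟩ := exists_col_eq h₂
  refine tensorMultilinearForm_nonneg F ι (fun q => castVec (g (col q))) (fun σ => ?_) _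
    (fun q => μ (col q)) (fun q => hμ _) (fun q => by simp [hcol]) fun p hp => ?_
  · exact hF _ hk (S.card_le_univ.trans_eq (Fintype.card_fin d)) ι σ _ (fun q => hg _)
      (fun q q' i => horth _ _ i) ⟨q₁, q₂, hdist.ne hr⟩
  · have : ρ p = none := by simpa [S] using mt (hι p).mpr hp
    simpa [this] using hx

/-- Supermodularity of degree-`d` forms all of whose `k`-dimensional
subtensors (`2 ≤ k ≤ d`) lie in the dual Graver cone `P_k*(A)`. -/
theorem form_supermodular {m n d : ℕ} (A : Matrix (Fin m) (Fin n) ℤ)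
    (F : (Fin d → Fin n) → ℝ)
    (hF : ∀ k, 2 ≤ k → k ≤ d → ∀ (ι : Fin k ↪ Fin d) (σ : Fin d → Fin n),
      memDualGraverConeDeg A k (subtensor F ι σ))
    (x : Fin n → ℝ) (hx : ∀ i, 0 ≤ x i)
    (t : ℕ) (g : Fin t → (Fin n → ℤ))
    (hg : ∀ r, g r ∈ graverBasis A) (hdist : Function.Injective g)
    (horth : ∀ r s, ∀ i, 0 ≤ g r i * g s i)
    (μ : Fin t → ℝ) (hμ : ∀ r, 0 ≤ μ r) :
    ∑ r, (tensorForm F (x + μ r • castVec (g r)) - tensorForm F x) ≤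
      tensorForm F (x + ∑ r, μ r • castVec (g r)) - tensorForm F x := by
  set v := fun r => μ r • castVec (g r)
  set T := fun ρ : Fin d → Option (Fin t) => tensorMultilinearForm F fun p => (ρ p).elim x v
  have hT₀ : tensorForm F x = T fun _ => none := rfl
  calc ∑ r, (tensorForm F (x + v r) - tensorForm F x)
      = ∑ r, (∑ ρ ∈ Fintype.piFinset (fun _ => ({r} : Finset (Fin t)).insertNone), T ρ -
          T fun _ => none) := by
        simp only [hT₀, ← tensorForm_add_sum, sum_singleton, T]
    _ ≤ ∑ ρ, T ρ - T fun _ => none := sum_monochromatic_le T fun _ _ _ _ _ h₁ h₂ hr =>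
        tensorMultilinearForm_coloring_nonneg A F hF hx hg hdist horth hμ h₁ h₂ hr
    _ = tensorForm F (x + ∑ r, v r) - tensorForm F x := by
        rw [hT₀, tensorForm_add_sum, ← univ_option, Fintype.piFinset_univ]
end
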